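/- Let p be a prime, n ≥ 2 and s ≥ 1 integers, and let f(X) = ∏_{j=1}^{h} (X − α_j)^{u_j}, where α_1, …, α_h ∈ closure(F_p) are pairwise distinct and u_j ∈ {±1, …, ±(n−1)} for each j. Let v_1, …, v_{2s} ∈ closure(F_p) and suppose there exist indices k with 1 ≤ k ≤ 2s and ℓ with 1 ≤ ℓ ≤ h such that v_k − α_ℓ ≠ v_i − α_j for all pairs (i, j) ≠ (k, ℓ) with 1 ≤ i ≤ 2s, 1 ≤ j ≤ h. Then, with β = α_ℓ − v_k, the order ord_β(P_{v,f}) is not divisible by n; in particular, P_{v,f}(X) is not an n-th power of a rational function in closure(F_p)(X). -/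

import Mathlib

open Polynomial

open scoped Classical

noncomputable section

namespace RestrictedCoords

variable {K L : Type*} [Field K] [Field L]

/-- The degree of a rational function: the maximum of the degrees of its numerator
and denominator (in lowest terms). -/
def ratDeg (f : RatFunc K) : ℕ := max f.num.natDegree f.denom.natDegree

/-- The order of `f` at `w`: the unique integer such that `(X - w) ^ (ordAt w f) * f`
extends to a rational function with neither a zero nor a pole at `w`.
(Here negative values correspond to poles.) -/
def ordAt (w : K) (f : RatFunc K) : ℤ :=
  (f.num.rootMultiplicity w : ℤ) - (f.denom.rootMultiplicity w : ℤ)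

/-- `f` has a (finite) pole at `w`. -/
def HasPoleAt (f : RatFunc K) (w : K) : Prop := f.denom.eval w = 0

/-- The image of a rational function under a field embedding. -/
def ratMap (φ : K →+* L) (f : RatFunc K) : RatFunc L :=
  algebraMap L[X] (RatFunc L) (f.num.map φ) / algebraMap L[X] (RatFunc L) (f.denom.map φ)

/-- The shifted rational function `f(X + v)`. -/
def shift (v : K) (f : RatFunc K) : RatFunc K :=
  algebraMap K[X] (RatFunc K) (f.num.comp (X + C v)) /
    algebraMap K[X] (RatFunc K) (f.denom.comp (X + C v))

/-- `P_{v,f}(X) = ∏_{i=1}^{s} f(X + v_i) / f(X + v_{s+i})`. -/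
def Pvf (s : ℕ) (f : RatFunc K) (v : Fin (s + s) → K) : RatFunc K :=
  ∏ i : Fin s, shift (v (i.castAdd s)) f / shift (v (i.addNat s)) f

/-- `L_{v,f}(X) = ∑_{i=1}^{s} (f(X + v_i) - f(X + v_{s+i}))`. -/
def Lvf (s : ℕ) (f : RatFunc K) (v : Fin (s + s) → K) : RatFunc K :=
  ∑ i : Fin s, (shift (v (i.castAdd s)) f - shift (v (i.addNat s)) f)

/-- Membership in the class `Q_{d,n}`: rational functions of degree at most `d`
which are not an `n`-th power of a rational function over the algebraic closure. -/
def MemQ (d n : ℕ) (f : RatFunc K) : Prop :=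
  ratDeg f ≤ d ∧
    ¬ ∃ g : RatFunc (AlgebraicClosure K),
        ratMap (algebraMap K (AlgebraicClosure K)) f = g ^ n

/-- Membership in the class `R_d`: rational functions of degree at most `d`
which have at least one finite pole (over the algebraic closure) whose order is not
a multiple of `p`. -/
def MemR (p d : ℕ) (f : RatFunc K) : Prop :=
  ratDeg f ≤ d ∧
    ∃ w : AlgebraicClosure K,
      HasPoleAt (ratMap (algebraMap K (AlgebraicClosure K)) f) w ∧
        ¬ (p : ℤ) ∣ ordAt w (ratMap (algebraMap K (AlgebraicClosure K)) f)

/-- Membership in the exceptional class `E`: rational functions of the form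
`α (h(X)^p - h(X)) + β X`. -/
def MemE (p : ℕ) (f : RatFunc L) : Prop :=
  ∃ α β : L, ∃ h : RatFunc L,
    f = RatFunc.C α * (h ^ p - h) + RatFunc.C β * RatFunc.X

/-- Membership in the class `P_d`: rational functions of degree `d` such that for
every nonzero `ω` the difference `f(X + ω) - f(X)` is not of the exceptional form
`α (g(X)^p - g(X)) + β X` over the algebraic closure. -/
def MemP (p d : ℕ) (f : RatFunc K) : Prop :=
  ratDeg f = d ∧
    ∀ ω : K, ω ≠ 0 →
      ¬ MemE p (ratMap (algebraMap K (AlgebraicClosure K)) (shift ω f - f))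

/-- The set `S_r(A)` of elements of `F_{q^r}` all of whose coordinates in the basis `θ`
belong to `A`. -/
def SrSet {Fq K : Type*} [Field Fq] [Fintype Fq] [Field K] [Algebra Fq K]
    {r : ℕ} (θ : Module.Basis (Fin r) Fq K) (A : Finset Fq) : Finset K :=
  (Fintype.piFinset fun _ : Fin r => A).image fun a => ∑ i, a i • θ i

/-- The mixed character sum `∑_{x ∈ T} χ(f₁(x)) ψ(f₂(x))`, where the points `x`
which are poles of `f₁` or `f₂` are excluded from the summation. -/
def charSum (χ : MulChar K ℂ) (ψ : AddChar K ℂ) (f₁ f₂ : RatFunc K)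
    (T : Finset K) : ℂ :=
  ∑ x ∈ T,
    if HasPoleAt f₁ x ∨ HasPoleAt f₂ x then 0
    else χ (f₁.eval (RingHom.id K) x) * ψ (f₂.eval (RingHom.id K) x)

/-- `κ_s(ρ) = (sρ(2ρ-1) + ρ - 1) / (4s(sρ+1))`. -/
def kappa (s : ℕ) (ρ : ℝ) : ℝ :=
  ((s : ℝ) * ρ * (2 * ρ - 1) + ρ - 1) / (4 * (s : ℝ) * ((s : ℝ) * ρ + 1))

/-! Orders at a point are additive, and `ordAt w (shift v f) = ordAt (w + v) f`. Hence
`ordAt β (Pvf s f v)` is a signed sum over `i` of `∑ j, [β + v i = α j] u j`, and the isolation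
hypothesis says that `β + v i = α j` only for `(i, j) = (k, ℓ)`. So the order is `± u ℓ`,
which `n` does not divide because `0 < |u ℓ| < n`, while every order of an `n`-th power is a
multiple of `n`. -/

lemma ordAt_algebraMap_div (w : K) {p q : K[X]} (hp : p ≠ 0) (hq : q ≠ 0) :
    ordAt w (algebraMap K[X] (RatFunc K) p / algebraMap K[X] (RatFunc K) q)
      = (p.rootMultiplicity w : ℤ) - q.rootMultiplicity w := by
  set f := algebraMap K[X] (RatFunc K) p / algebraMap K[X] (RatFunc K) q
  have hf : f ≠ 0 := div_ne_zero (RatFunc.algebraMap_ne_zero hp) (RatFunc.algebraMap_ne_zero hq)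
  have hcross : f.num * q = f.denom * p := by
    apply RatFunc.algebraMap_injective K
    have h := f.num_div_denom
    rw [div_eq_div_iff (RatFunc.algebraMap_ne_zero f.denom_ne_zero)
      (RatFunc.algebraMap_ne_zero hq)] at h
    simpa only [map_mul, mul_comm] using h
  have hmult := congrArg (rootMultiplicity w) hcross
  rw [rootMultiplicity_mul (mul_ne_zero (RatFunc.num_ne_zero hf) hq),
    rootMultiplicity_mul (mul_ne_zero f.denom_ne_zero hp)] at hmult
  unfold ordAt
  omega

lemma ordAt_algebraMap (w : K) (p : K[X]) :
    ordAt w (algebraMap K[X] (RatFunc K) p) = p.rootMultiplicity w := by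
  simp [ordAt]

lemma ordAt_mul (w : K) {f g : RatFunc K} (hf : f ≠ 0) (hg : g ≠ 0) :
    ordAt w (f * g) = ordAt w f + ordAt w g := by
  have hfn := RatFunc.num_ne_zero hf
  have hgn := RatFunc.num_ne_zero hg
  have h : f * g = algebraMap K[X] (RatFunc K) (f.num * g.num)
      / algebraMap K[X] (RatFunc K) (f.denom * g.denom) := by
    rw [map_mul, map_mul, ← div_mul_div_comm, f.num_div_denom, g.num_div_denom]
  rw [h, ordAt_algebraMap_div w (mul_ne_zero hfn hgn)
      (mul_ne_zero f.denom_ne_zero g.denom_ne_zero),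
    rootMultiplicity_mul (mul_ne_zero hfn hgn),
    rootMultiplicity_mul (mul_ne_zero f.denom_ne_zero g.denom_ne_zero)]
  unfold ordAt
  push_cast
  ring

lemma ordAt_inv (w : K) {f : RatFunc K} (hf : f ≠ 0) : ordAt w f⁻¹ = -ordAt w f := by
  conv_lhs => rw [← f.num_div_denom, inv_div]
  rw [ordAt_algebraMap_div w f.denom_ne_zero (RatFunc.num_ne_zero hf), ordAt, neg_sub]

lemma ordAt_div (w : K) {f g : RatFunc K} (hf : f ≠ 0) (hg : g ≠ 0) :
    ordAt w (f / g) = ordAt w f - ordAt w g := by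
  rw [div_eq_mul_inv, ordAt_mul w hf (inv_ne_zero hg), ordAt_inv w hg, sub_eq_add_neg]

lemma ordAt_zero (w : K) : ordAt w (0 : RatFunc K) = 0 := by
  simp [ordAt]

lemma ordAt_one (w : K) : ordAt w (1 : RatFunc K) = 0 := by
  simp [ordAt]

lemma ordAt_pow (w : K) (g : RatFunc K) (n : ℕ) : ordAt w (g ^ n) = n * ordAt w g := by
  induction n with
  | zero => simp [ordAt_one]
  | succ m ih =>
      rcases eq_or_ne g 0 with rfl | hg
      · simp [ordAt_zero]
      · rw [pow_succ, ordAt_mul w (pow_ne_zero m hg) hg, ih]; push_cast; ring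

lemma ordAt_zpow (w : K) {g : RatFunc K} (hg : g ≠ 0) (m : ℤ) :
    ordAt w (g ^ m) = m * ordAt w g := by
  obtain ⟨n, rfl | rfl⟩ := m.eq_nat_or_neg
  · rw [zpow_natCast, ordAt_pow]
  · rw [zpow_neg, zpow_natCast, ordAt_inv w (pow_ne_zero n hg), ordAt_pow, neg_mul]

lemma ordAt_prod {ι : Type*} (w : K) (t : Finset ι) {g : ι → RatFunc K}
    (hg : ∀ i ∈ t, g i ≠ 0) :
    ordAt w (∏ i ∈ t, g i) = ∑ i ∈ t, ordAt w (g i) := by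
  induction t using Finset.cons_induction with
  | empty => simp [ordAt_one]
  | cons a t ha ih =>
      rw [Finset.prod_cons, Finset.sum_cons,
        ordAt_mul w (hg a (Finset.mem_cons_self a t))
          (Finset.prod_ne_zero_iff.2 fun i hi => hg i (Finset.mem_cons_of_mem hi)),
        ih (fun i hi => hg i (Finset.mem_cons_of_mem hi))]

lemma ordAt_X_sub_C (w a : K) :
    ordAt w (RatFunc.X - RatFunc.C a) = if w = a then 1 else 0 := by
  rw [← RatFunc.algebraMap_X, ← RatFunc.algebraMap_C, ← map_sub, ordAt_algebraMap,
    rootMultiplicity_X_sub_C]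
  split_ifs <;> simp

lemma rootMultiplicity_comp_X_add_C (p : K[X]) (v w : K) :
    (p.comp (X + C v)).rootMultiplicity w = p.rootMultiplicity (w + v) := by
  rw [rootMultiplicity_eq_rootMultiplicity, comp_assoc,
    rootMultiplicity_eq_rootMultiplicity (t := w + v), add_comp, X_comp, C_comp, C_add, add_assoc,
    add_comm (C w)]

lemma shift_ne_zero (v : K) {f : RatFunc K} (hf : f ≠ 0) : shift v f ≠ 0 :=
  div_ne_zero (RatFunc.algebraMap_ne_zero (comp_X_add_C_ne_zero_iff.2 (RatFunc.num_ne_zero hf)))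
    (RatFunc.algebraMap_ne_zero (comp_X_add_C_ne_zero_iff.2 f.denom_ne_zero))

lemma ordAt_shift (w v : K) {f : RatFunc K} (hf : f ≠ 0) :
    ordAt w (shift v f) = ordAt (w + v) f := by
  rw [shift, ordAt_algebraMap_div w (comp_X_add_C_ne_zero_iff.2 (RatFunc.num_ne_zero hf))
    (comp_X_add_C_ne_zero_iff.2 f.denom_ne_zero), rootMultiplicity_comp_X_add_C,
    rootMultiplicity_comp_X_add_C, ordAt]

lemma ordAt_Pvf (w : K) (s : ℕ) {f : RatFunc K} (hf : f ≠ 0) (v : Fin (s + s) → K) :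
    ordAt w (Pvf s f v) =
      ∑ i : Fin s, (ordAt (w + v (i.castAdd s)) f - ordAt (w + v (i.addNat s)) f) := by
  rw [Pvf, ordAt_prod w _ fun i _ => div_ne_zero (shift_ne_zero _ hf) (shift_ne_zero _ hf)]
  simp only [ordAt_div w (shift_ne_zero _ hf) (shift_ne_zero _ hf), ordAt_shift w _ hf]

lemma X_sub_C_ne_zero (a : K) : (RatFunc.X - RatFunc.C a : RatFunc K) ≠ 0 := by
  rw [← RatFunc.algebraMap_X, ← RatFunc.algebraMap_C, ← map_sub]
  exact RatFunc.algebraMap_ne_zero (Polynomial.X_sub_C_ne_zero a)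

lemma ordAt_prod_X_sub_C_zpow {ι : Type*} (w : K) (t : Finset ι) (α : ι → K)
    (u : ι → ℤ) :
    ordAt w (∏ j ∈ t, (RatFunc.X - RatFunc.C (α j)) ^ u j) =
      ∑ j ∈ t, if w = α j then u j else 0 := by
  rw [ordAt_prod w t fun j _ => zpow_ne_zero _ (X_sub_C_ne_zero _)]
  simp only [ordAt_zpow w (X_sub_C_ne_zero _), ordAt_X_sub_C, mul_ite, mul_one, mul_zero]

lemma sum_castAdd_sub_addNat_single {M : Type*} [AddCommGroup M] {s : ℕ} (k : Fin (s + s))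
    (a : M) :
    letI c : Fin (s + s) → M := Pi.single k a
    ∑ i : Fin s, (c (i.castAdd s) - c (i.addNat s)) = a ∨
      ∑ i : Fin s, (c (i.castAdd s) - c (i.addNat s)) = -a := by
  rw [Finset.sum_sub_distrib]
  induction k using Fin.addCases with
  | left i₀ =>
    have hne : ∀ i : Fin s, i.addNat s ≠ i₀.castAdd s := fun i => by
      simp only [ne_eq, Fin.ext_iff, Fin.val_addNat, Fin.val_castAdd]; omega
    left
    simp [Pi.single_apply, hne]
  | right i₀ =>
    have hne : ∀ i : Fin s, i.castAdd s ≠ i₀.addNat s := fun i => by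
      simp only [ne_eq, Fin.ext_iff, Fin.val_addNat, Fin.val_castAdd]; omega
    right
    simp [Pi.single_apply, hne]

theorem statement_10_general (p : ℕ) [Fact p.Prime] (n s h : ℕ)
    (α : Fin h → AlgebraicClosure (ZMod p))
    (u : Fin h → ℤ) (hu : ∀ j, u j ≠ 0 ∧ |u j| ≤ (n : ℤ) - 1)
    (f : RatFunc (AlgebraicClosure (ZMod p)))
    (hf : f = ∏ j, (RatFunc.X - RatFunc.C (α j)) ^ (u j))
    (v : Fin (s + s) → AlgebraicClosure (ZMod p))
    (k : Fin (s + s)) (ℓ : Fin h)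
    (hkl : ∀ (i : Fin (s + s)) (j : Fin h), (i, j) ≠ (k, ℓ) → v k - α ℓ ≠ v i - α j) :
    ¬ (n : ℤ) ∣ ordAt (α ℓ - v k) (Pvf s f v) ∧
      ¬ ∃ g : RatFunc (AlgebraicClosure (ZMod p)), Pvf s f v = g ^ n := by
  set β := α ℓ - v k
  have hf0 : f ≠ 0 :=
    hf ▸ Finset.prod_ne_zero_iff.2 fun j _ => zpow_ne_zero _ (X_sub_C_ne_zero _)
  have hmatch : ∀ i j, β + v i = α j ↔ (i, j) = (k, ℓ) := by
    refine fun i j => ⟨fun hij => ?_, fun hij => ?_⟩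
    · by_contra hne
      exact hkl i j hne (by rw [← hij]; ring)
    · obtain ⟨rfl, rfl⟩ := Prod.ext_iff.1 hij
      ring
  have hordf : ∀ i, ordAt (β + v i) f = (Pi.single k (u ℓ) : Fin (s + s) → ℤ) i := by
    intro i
    simp only [hf, ordAt_prod_X_sub_C_zpow, hmatch, Prod.ext_iff, ite_and, Pi.single_apply]
    split_ifs <;> simp
  have hordP : ordAt β (Pvf s f v) = u ℓ ∨ ordAt β (Pvf s f v) = -u ℓ := by
    simpa only [ordAt_Pvf β s hf0, hordf] using sum_castAdd_sub_addNat_single k (u ℓ)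
  have hndvd : ¬ (n : ℤ) ∣ u ℓ := fun hdvd =>
    (hu ℓ).1 (Int.eq_zero_of_abs_lt_dvd hdvd (by linarith [(hu ℓ).2]))
  have hndvdP : ¬ (n : ℤ) ∣ ordAt β (Pvf s f v) := by
    rcases hordP with hP | hP <;> simpa only [hP, dvd_neg] using hndvd
  refine ⟨hndvdP, ?_⟩
  rintro ⟨g, hg⟩
  exact hndvdP (hg ▸ (ordAt_pow β g n).symm ▸ dvd_mul_right _ _)

/-- The key step in the proof of Lemma 4.1 of the paper: if some shifted zero/pole
`v_k - α_ℓ` of the data is not matched by any other shifted zero/pole, then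
`P_{v,f}` has order `≢ 0 (mod n)` at `β = α_ℓ - v_k`, and in particular is not an
`n`-th power. -/
theorem statement_10 (p : ℕ) [Fact p.Prime] (n s h : ℕ) (hn : 2 ≤ n) (hs : 1 ≤ s)
    (α : Fin h → AlgebraicClosure (ZMod p)) (hα : Function.Injective α)
    (u : Fin h → ℤ) (hu : ∀ j, u j ≠ 0 ∧ |u j| ≤ (n : ℤ) - 1)
    (f : RatFunc (AlgebraicClosure (ZMod p)))
    (hf : f = ∏ j, (RatFunc.X - RatFunc.C (α j)) ^ (u j))
    (v : Fin (s + s) → AlgebraicClosure (ZMod p))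
    (k : Fin (s + s)) (ℓ : Fin h)
    (hkl : ∀ (i : Fin (s + s)) (j : Fin h), (i, j) ≠ (k, ℓ) → v k - α ℓ ≠ v i - α j) :
    ¬ (n : ℤ) ∣ ordAt (α ℓ - v k) (Pvf s f v) ∧
      ¬ ∃ g : RatFunc (AlgebraicClosure (ZMod p)), Pvf s f v = g ^ n :=
  statement_10_general p n s h α u hu f hf v k ℓ hkl

end RestrictedCoords
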